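/- The function λ ↦ r*(λ), giving the unique nontrivial solution in (0,1) of r = 1 - e^{-λ r} for λ > 1, is strictly monotone increasing. -/

import Mathlib

/-- The map λ ↦ r*(λ), where r*(λ) is the unique solution in (0,1) of
r = 1 - e^{-λ r} for λ > 1, is strictly monotone increasing. -/
theorem rstar_strictMono (lam1 lam2 r1 r2 : ℝ)
    (h1 : 1 < lam1) (h12 : lam1 < lam2)
    (hr1 : r1 ∈ Set.Ioo (0 : ℝ) 1) (hfix1 : r1 = 1 - Real.exp (-lam1 * r1))
    (hr2 : r2 ∈ Set.Ioo (0 : ℝ) 1) (hfix2 : r2 = 1 - Real.exp (-lam2 * r2)) :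
    r1 < r2 := by
  obtain ⟨hr1p, hr1lt⟩ := hr1
  obtain ⟨hr2p, hr2lt⟩ := hr2
  by_contra hcon
  push_neg at hcon
  rcases eq_or_lt_of_le hcon with heq | hlt
  · -- r2 = r1 forces lam1 = lam2
    have hre : Real.exp (-lam1 * r1) = Real.exp (-lam2 * r2) := by linarith [hfix1, hfix2]
    have := Real.exp_injective hre
    rw [heq] at this
    have : lam1 = lam2 := by
      have hr1ne : r1 ≠ 0 := ne_of_gt hr1p
      field_simp at this
      linarith
    linarith
  · -- r2 < r1 : use convexity of exp
    have hkey : Real.exp (-lam2 * r1) < 1 - r1 := by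
      have : Real.exp (-lam2 * r1) < Real.exp (-lam1 * r1) := by
        apply Real.exp_lt_exp.mpr
        nlinarith
      linarith [hfix1]
    -- convex combination: -lam2*r2 = a*0 + b*(-lam2*r1), a = (r1-r2)/r1, b = r2/r1
    have ha : (0:ℝ) ≤ (r1 - r2) / r1 := div_nonneg (by linarith) (le_of_lt hr1p)
    have hb : (0:ℝ) < r2 / r1 := by positivity
    have hab : (r1 - r2) / r1 + r2 / r1 = 1 := by field_simp; ring
    have hconv := convexOn_exp.2 (Set.mem_univ (0:ℝ)) (Set.mem_univ (-lam2 * r1))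
      ha (le_of_lt hb) hab
    simp only [smul_eq_mul, mul_zero, zero_add, Real.exp_zero, mul_one] at hconv
    have hpt : r2 / r1 * (-lam2 * r1) = -lam2 * r2 := by field_simp
    rw [hpt] at hconv
    have hfin : Real.exp (-lam2 * r2) < (r1 - r2) / r1 + r2 / r1 * (1 - r1) := by
      calc Real.exp (-lam2 * r2) ≤ (r1 - r2) / r1 + r2 / r1 * Real.exp (-lam2 * r1) := hconv
        _ < (r1 - r2) / r1 + r2 / r1 * (1 - r1) := by nlinarith
    have : (r1 - r2) / r1 + r2 / r1 * (1 - r1) = 1 - r2 := by field_simp; ring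
    rw [this] at hfin
    linarith [hfix2]
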